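/- Let H be a Hopf algebra over a field k and M a right-right Hopf module over H. Define P : M → M by P(m) = Σ m₀ · S(m₁). Then P(m) ∈ M^{coH} for every m ∈ M (i.e., ρ(P(m)) = P(m) ⊗ 1), and P restricted to M^{coH} is the identity; hence P is a projection of M onto the coinvariants M^{coH}. -/

import Mathlib

/-!
In the convolution algebra `Hom(H, H ⊗ H)` the comultiplication factors as `i₁ * i₂`, where
`i₁ h = h ⊗ 1` and `i₂ h = 1 ⊗ h`, and `comul ∘ S` is a right inverse of it. As `i₁ ∘ S` is a left
inverse of `i₁`, this gives `i₂ * (comul ∘ S) = i₁ ∘ S`, that is `Σ (1 ⊗ h₁) Δ(S h₂) = S h ⊗ 1`.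

Let `M ⊗ H` act on the right by `H ⊗ H`. Compatibility and coassociativity of `ρ` give
`ρ (P m) = Σ (m₀ ⊗ m₁) Δ(S m₂) = Σ (m₀ ⊗ 1) ((1 ⊗ m₁) Δ(S m₂)) = Σ m₀ S(m₁) ⊗ 1 = P m ⊗ 1`.
On a coinvariant `m` we get `P m = m · S 1 = m`, and the two facts together make `P` idempotent.
-/

open TensorProduct Coalgebra

namespace LinearMap

open WithConv Algebra.TensorProduct HopfAlgebra

variable {R A : Type*} [CommSemiring R]

lemma includeLeft_convMul_includeRight [Semiring A] [Algebra R A] [CoalgebraStruct R A] :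
    toConv (includeLeft : A →ₐ[R] A ⊗[R] A).toLinearMap *
      toConv (includeRight : A →ₐ[R] A ⊗[R] A).toLinearMap = toConv comul := by
  have h : mul' R (A ⊗[R] A) ∘ₗ map includeLeft.toLinearMap includeRight.toLinearMap = id := by
    ext; simp
  rw [convMul_def, ofConv_toConv, ofConv_toConv, ← comp_assoc, h, id_comp]

variable [Semiring A] [HopfAlgebra R A]

lemma includeRight_convMul_comul_comp_antipode :
    toConv (includeRight : A →ₐ[R] A ⊗[R] A).toLinearMap * toConv (comul ∘ₗ antipode R) =
      toConv ((includeLeft : A →ₐ[R] A ⊗[R] A).toLinearMap ∘ₗ antipode R) := by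
  set i₁ := (includeLeft : A →ₐ[R] A ⊗[R] A).toLinearMap
  set i₂ := (includeRight : A →ₐ[R] A ⊗[R] A).toLinearMap
  have h_inv : toConv (i₁ ∘ₗ antipode R) * toConv i₁ = 1 := by
    apply WithConv.ofConv_injective
    have h := algHom_comp_convMul_distrib (includeLeft : A →ₐ[R] A ⊗[R] A)
      (toConv (antipode R)) (toConv id)
    rw [antipode_mul_id, comp_id] at h
    rw [← h]
    ext; simp
  calc toConv i₂ * toConv (comul ∘ₗ antipode R)
      = toConv (i₁ ∘ₗ antipode R) * toConv i₁ * toConv i₂ * toConv (comul ∘ₗ antipode R) := by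
        rw [h_inv, one_mul]
    _ = toConv (i₁ ∘ₗ antipode R) * (toConv comul * toConv (comul ∘ₗ antipode R)) := by
        rw [← includeLeft_convMul_includeRight, mul_assoc, mul_assoc, mul_assoc]
    _ = toConv (i₁ ∘ₗ antipode R) := by rw [comul_right_inv, mul_one]

end LinearMap

namespace HopfModule

open HopfAlgebra

variable {k H M : Type*} [CommSemiring k] [Semiring H] [AddCommMonoid M] [Module k M]

section Action

variable [Algebra k H]

def tensorAction (μ : M ⊗[k] H →ₗ[k] M) : (M ⊗[k] H) ⊗[k] (H ⊗[k] H) →ₗ[k] M ⊗[k] H :=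
  map μ (LinearMap.mul' k H) ∘ₗ (tensorTensorTensorComm k M H H H).toLinearMap

variable (μ : M ⊗[k] H →ₗ[k] M)

@[simp]
lemma tensorAction_tmul (m : M) (h a b : H) :
    tensorAction μ ((m ⊗ₜ h) ⊗ₜ (a ⊗ₜ b)) = μ (m ⊗ₜ a) ⊗ₜ (h * b) := rfl

lemma tensorAction_tmul_eq_tmul_one (m : M) (h : H) (x : H ⊗[k] H) :
    tensorAction μ ((m ⊗ₜ h) ⊗ₜ x) = tensorAction μ ((m ⊗ₜ 1) ⊗ₜ ((1 ⊗ₜ h) * x)) := by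
  induction x using TensorProduct.induction_on with
  | zero => simp
  | tmul a b => simp
  | add x y hx hy => simp only [tmul_add, mul_add, map_add, hx, hy]

end Action

variable [HopfAlgebra k H]

lemma tensorAction_comp_comul_antipode (μ : M ⊗[k] H →ₗ[k] M) :
    tensorAction μ ∘ₗ map LinearMap.id (comul ∘ₗ antipode k)
        ∘ₗ (TensorProduct.assoc k M H H).symm.toLinearMap ∘ₗ map LinearMap.id comul =
      (TensorProduct.mk k M H).flip 1 ∘ₗ μ ∘ₗ map LinearMap.id (antipode k) := by
  refine TensorProduct.ext' fun m h => ?_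
  have h_conv := congr($(LinearMap.includeRight_convMul_comul_comp_antipode (R := k) (A := H)) h)
  simp only [(ℛ k h).convMul_apply, LinearMap.comp_apply, AlgHom.toLinearMap_apply,
    Algebra.TensorProduct.includeLeft_apply, Algebra.TensorProduct.includeRight_apply] at h_conv
  simp only [LinearMap.comp_apply, map_tmul, LinearMap.id_coe, id_eq]
  rw [← (ℛ k h).eq]
  simp only [tmul_sum, map_sum, LinearEquiv.coe_coe, assoc_symm_tmul, map_tmul, LinearMap.id_coe,
    id_eq, LinearMap.comp_apply]
  rw [Finset.sum_congr rfl fun i _ => tensorAction_tmul_eq_tmul_one μ m _ _, ← map_sum, ← tmul_sum,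
    h_conv]
  simp

theorem coaction_comp_antipode_action_eq {μ : M ⊗[k] H →ₗ[k] M} {ρ : M →ₗ[k] M ⊗[k] H}
    (hρ_coassoc : map ρ LinearMap.id ∘ₗ ρ =
      (TensorProduct.assoc k M H H).symm.toLinearMap ∘ₗ map LinearMap.id comul ∘ₗ ρ)
    (hcompat : ρ ∘ₗ μ = tensorAction μ ∘ₗ map ρ comul) :
    ρ ∘ₗ μ ∘ₗ map LinearMap.id (antipode k) ∘ₗ ρ =
      (TensorProduct.mk k M H).flip 1 ∘ₗ μ ∘ₗ map LinearMap.id (antipode k) ∘ₗ ρ := by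
  have h_swap : map ρ (comul (A := H)) ∘ₗ map LinearMap.id (antipode k) =
      map LinearMap.id (comul ∘ₗ antipode k) ∘ₗ map ρ LinearMap.id := by
    rw [← map_comp, ← map_comp, LinearMap.comp_id, LinearMap.comp_id, LinearMap.id_comp]
  calc ρ ∘ₗ μ ∘ₗ map LinearMap.id (antipode k) ∘ₗ ρ
      = tensorAction μ ∘ₗ (map ρ comul ∘ₗ map LinearMap.id (antipode k)) ∘ₗ ρ := by
        simp only [← LinearMap.comp_assoc, hcompat]
    _ = tensorAction μ ∘ₗ map LinearMap.id (comul ∘ₗ antipode k)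
          ∘ₗ (TensorProduct.assoc k M H H).symm.toLinearMap ∘ₗ map LinearMap.id comul ∘ₗ ρ := by
        rw [h_swap, LinearMap.comp_assoc, hρ_coassoc]
    _ = _ := by
        simpa only [LinearMap.comp_assoc] using
          congrArg (· ∘ₗ ρ) (tensorAction_comp_comul_antipode μ)

end HopfModule

section Projection

variable (k H M : Type*) [Field k] [Ring H] [HopfAlgebra k H] [AddCommGroup M] [Module k M]

noncomputable def coinvProj (μ : M ⊗[k] H →ₗ[k] M) (ρ : M →ₗ[k] M ⊗[k] H) : M →ₗ[k] M :=
  μ ∘ₗ TensorProduct.map LinearMap.id (HopfAlgebra.antipode (R := k)) ∘ₗ ρ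

theorem coinvariants_projection
    (μ : M ⊗[k] H →ₗ[k] M) (ρ : M →ₗ[k] M ⊗[k] H)
    (hμ_one : ∀ m : M, μ (m ⊗ₜ[k] 1) = m)
    (hρ_coassoc : TensorProduct.map ρ LinearMap.id ∘ₗ ρ =
      (TensorProduct.assoc k M H H).symm.toLinearMap
        ∘ₗ TensorProduct.map LinearMap.id Coalgebra.comul ∘ₗ ρ)
    (hcompat : ρ ∘ₗ μ =
      TensorProduct.map μ (LinearMap.mul' k H)
        ∘ₗ (TensorProduct.tensorTensorTensorComm k M H H H).toLinearMap
        ∘ₗ TensorProduct.map ρ Coalgebra.comul) :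
    (∀ m : M, ρ (coinvProj k H M μ ρ m) = coinvProj k H M μ ρ m ⊗ₜ[k] 1) ∧
    (∀ m : M, ρ m = m ⊗ₜ[k] 1 → coinvProj k H M μ ρ m = m) ∧
    (∀ m : M, coinvProj k H M μ ρ (coinvProj k H M μ ρ m) = coinvProj k H M μ ρ m) := by
  have h_coinv (m : M) : ρ (coinvProj k H M μ ρ m) = coinvProj k H M μ ρ m ⊗ₜ[k] 1 :=
    congr($(HopfModule.coaction_comp_antipode_action_eq hρ_coassoc hcompat) m)
  have h_fix (m : M) (hm : ρ m = m ⊗ₜ[k] 1) : coinvProj k H M μ ρ m = m := by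
    simp [coinvProj, hm, hμ_one]
  exact ⟨h_coinv, h_fix, fun m => h_fix _ (h_coinv m)⟩

end Projection
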